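/- Let $\mu \in (0,1)$, $\alpha \geq -1$, and $a_0 = 1$, $a_n = e^{-n(n+1)/2}$ for $n \geq 1$. Let $g(x) = x^{\alpha/2} \mu^{-(\alpha+2)/2} e^{-it \log_\mu x}$ for fixed $t \in \mathbb{R}$, and $g_n = g \cdot \chi_{[a_n, a_{n-1}]}$. Then, with the weighted norm $\|f\|^2 = \int_0^\infty |f(x)|^2 x^{-(\alpha+1)} dx$, one has $\|g_n\|^2 = \mu^{-(\alpha+2)} n$, the functions $g_n$ are pairwise orthogonal, and for $\widehat{C}f(x) = \mu^{-1} f(x/\mu)$ and $\lambda = \mu^{-(\alpha+2)/2}e^{it}$, for all $n > \ln(1/\mu)$ one has $\|(\widehat{C} - \lambda) g_n\|^2 = -2|\lambda|^2 \mu^{-(\alpha+2)} \ln \mu$. In particular $\|(\widehat{C} - \lambda) g_n\|/\|g_n\| \to 0$ as $n \to \infty$. -/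

import Mathlib

open Complex MeasureTheory Filter

/-- `a 0 = 1`, `a n = e^(-n(n+1)/2)`. -/
noncomputable def aSeq (n : ℕ) : ℝ := Real.exp (-((n : ℝ) * ((n : ℝ) + 1) / 2))

/-- `g(x) = x^(α/2) μ^(-(α+2)/2) e^(-i t log_μ x)`. -/
noncomputable def gEig (μ α t : ℝ) (x : ℝ) : ℂ :=
  ((x ^ (α / 2) * μ ^ (-(α + 2) / 2) : ℝ) : ℂ) *
    Complex.exp (-Complex.I * (t : ℂ) * ((Real.log x / Real.log μ : ℝ) : ℂ))

/-- `g_n = g · χ_[a_n, a_(n-1)]`. -/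
noncomputable def gSeq (μ α t : ℝ) (n : ℕ) : ℝ → ℂ :=
  Set.indicator (Set.Icc (aSeq n) (aSeq (n - 1))) (gEig μ α t)

/-!
On `(0, ∞)` one has `‖g x‖² x^(-(α+1)) = μ^(-(α+2)) / x`, so the weighted norm of `g` cut off to
`[a, b]` is `μ^(-(α+2)) log (b / a)`, and `log (a_{n-1} / a_n) = n`. Moreover `g` is an exact
eigenfunction, `μ⁻¹ g (x / μ) = λ g x`, so `(Ĉ - λ) g_n = λ (χ_{μI} - χ_I) g` with
`I = [a_n, a_{n-1}]`. Once `a_n ≤ μ a_{n-1}` the intervals `I` and `μI` overlap, and their symmetric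
difference consists of two intervals of logarithmic length `-log μ`, independently of `n`.
-/

open Set

lemma aSeq_pos (n : ℕ) : 0 < aSeq n := Real.exp_pos _

lemma aSeq_antitone : Antitone aSeq := fun m n h => by
  have : (m : ℝ) ≤ n := Nat.cast_le.mpr h
  unfold aSeq
  gcongr

lemma aSeq_pred {n : ℕ} (hn : 1 ≤ n) : aSeq (n - 1) = Real.exp n * aSeq n := by
  unfold aSeq
  rw [← Real.exp_add, Nat.cast_sub hn, Nat.cast_one]
  ring_nf

lemma log_aSeq_pred_div {n : ℕ} (hn : 1 ≤ n) : Real.log (aSeq (n - 1) / aSeq n) = n := by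
  rw [aSeq_pred hn, mul_div_cancel_right₀ _ (aSeq_pos n).ne', Real.log_exp]

lemma aSeq_lt_mul_aSeq_pred {μ : ℝ} (hμ : 0 < μ) {n : ℕ} (hn : 1 ≤ n)
    (hn' : Real.log (1 / μ) < n) : aSeq n < μ * aSeq (n - 1) := by
  have : 1 < μ * Real.exp n := by
    rw [one_div, Real.log_inv, neg_lt, ← Real.exp_lt_exp, Real.exp_log hμ, Real.exp_neg] at hn'
    exact (inv_lt_iff_one_lt_mul₀ (Real.exp_pos _)).mp hn'
  rw [aSeq_pred hn, ← mul_assoc]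
  exact lt_mul_left (aSeq_pos n) this

lemma volume_Icc_aSeq_inter_Icc_aSeq {n m : ℕ} (hnm : n ≠ m) :
    volume (Icc (aSeq n) (aSeq (n - 1)) ∩ Icc (aSeq m) (aSeq (m - 1))) = 0 := by
  wlog h : n < m generalizing n m
  · rw [inter_comm]
    exact this hnm.symm (hnm.lt_or_gt.resolve_left h)
  have : aSeq (m - 1) ≤ aSeq n := aSeq_antitone (by omega)
  refine measure_mono_null (fun x hx => ?_) (measure_singleton (aSeq n))
  exact le_antisymm (hx.2.2.trans this) hx.1.1

lemma norm_gEig_sq_mul_rpow {μ α t x : ℝ} (hμ : 0 < μ) (hx : 0 < x) :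
    ‖gEig μ α t x‖ ^ 2 * x ^ (-(α + 1)) = μ ^ (-(α + 2)) * x⁻¹ := by
  have hsq : ∀ {y : ℝ} (r : ℝ), 0 < y → (y ^ (r / 2)) ^ 2 = y ^ r := fun r hy => by
    rw [← Real.rpow_natCast, ← Real.rpow_mul hy.le]
    norm_num
  have hexp : ‖Complex.exp (-I * t * ((Real.log x / Real.log μ : ℝ) : ℂ))‖ = 1 := by
    rw [Complex.norm_exp]
    simp
  rw [gEig, norm_mul, hexp, mul_one, norm_real, Real.norm_of_nonneg (by positivity), mul_pow,
    hsq _ hx, hsq _ hμ, mul_right_comm, ← Real.rpow_add hx, ← Real.rpow_neg_one]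
  ring_nf

lemma gEig_div {μ α t x : ℝ} (hμ : 0 < μ) (hμ1 : μ ≠ 1) (hx : 0 < x) :
    (μ : ℂ)⁻¹ * gEig μ α t (x / μ) =
      ((μ ^ (-(α + 2) / 2) : ℝ) : ℂ) * Complex.exp (I * t) * gEig μ α t x := by
  have hlogμ : Real.log μ ≠ 0 := Real.log_ne_zero_of_pos_of_ne_one hμ hμ1
  have hmod : μ⁻¹ * ((x / μ) ^ (α / 2) * μ ^ (-(α + 2) / 2))
      = μ ^ (-(α + 2) / 2) * (x ^ (α / 2) * μ ^ (-(α + 2) / 2)) := by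
    rw [Real.div_rpow hx.le hμ.le, ← Real.rpow_neg_one, div_eq_mul_inv, ← Real.rpow_neg hμ.le]
    have : μ ^ (-1 : ℝ) * μ ^ (-(α / 2)) = μ ^ (-(α + 2) / 2) := by
      rw [← Real.rpow_add hμ]; ring_nf
    linear_combination x ^ (α / 2) * μ ^ (-(α + 2) / 2) * this
  have harg : Real.log (x / μ) / Real.log μ = Real.log x / Real.log μ - 1 := by
    rw [Real.log_div hx.ne' hμ.ne']
    field_simp
  have hphase : Complex.exp (-I * t * ((Real.log (x / μ) / Real.log μ : ℝ) : ℂ)) =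
      Complex.exp (I * t) * Complex.exp (-I * t * ((Real.log x / Real.log μ : ℝ) : ℂ)) := by
    rw [← Complex.exp_add, harg]
    push_cast
    ring_nf
  have hmodC := congrArg ((↑) : ℝ → ℂ) hmod
  push_cast at hmodC
  rw [gEig, gEig, hphase]
  simp only [ofReal_mul]
  linear_combination
    Complex.exp (I * t) * Complex.exp (-I * t * ((Real.log x / Real.log μ : ℝ) : ℂ)) * hmodC

lemma integrable_indicator_Icc_mul_inv (C : ℝ) {p q : ℝ} (hp : 0 < p) :
    Integrable ((Icc p q).indicator fun x : ℝ => C * x⁻¹) :=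
  (integrable_indicator_iff measurableSet_Icc).mpr <| ContinuousOn.integrableOn_Icc <|
    continuousOn_const.mul <| continuousOn_id.inv₀ fun _ hx => (hp.trans_le hx.1).ne'

lemma integral_Ioi_indicator_Icc_mul_inv (C : ℝ) {p q : ℝ} (hp : 0 < p) (hpq : p ≤ q) :
    ∫ x in Ioi 0, (Icc p q).indicator (fun x => C * x⁻¹) x = C * Real.log (q / p) := by
  rw [setIntegral_indicator measurableSet_Icc,
    inter_eq_right.mpr ((Icc_subset_Ioi_iff hpq).mpr hp), integral_Icc_eq_integral_Ioc,
    ← intervalIntegral.integral_of_le hpq, intervalIntegral.integral_const_mul,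
    integral_inv_of_pos hp (hp.trans_le hpq)]

section IndicatorIntegrals

variable {f : ℝ → ℂ} {w : ℝ → ℝ} {C a b : ℝ}

lemma integral_norm_indicator_Icc_sq_mul (hf : ∀ x > 0, ‖f x‖ ^ 2 * w x = C * x⁻¹)
    (ha : 0 < a) (hab : a ≤ b) :
    ∫ x in Ioi 0, ‖(Icc a b).indicator f x‖ ^ 2 * w x = C * Real.log (b / a) := by
  rw [← integral_Ioi_indicator_Icc_mul_inv C ha hab]
  refine setIntegral_congr_fun measurableSet_Ioi fun x hx => ?_
  by_cases hI : x ∈ Icc a b <;> simp [hI, hf x hx]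

-- `heig` moves the dilation from `f` onto the interval, `(μ⁻¹ χ_I f)(x / μ) = λ χ_{μI}(x) f x`,
-- and then `|χ_{μI} - χ_I|² = χ_{μI} + χ_I - 2 χ_{μI ∩ I}`.
lemma norm_dilate_indicator_Icc_sub_sq_mul {μ x : ℝ} {lam : ℂ} (hμ : 0 < μ)
    (hf : ∀ x > 0, ‖f x‖ ^ 2 * w x = C * x⁻¹)
    (heig : ∀ x > 0, (μ : ℂ)⁻¹ * f (x / μ) = lam * f x) (hx : 0 < x) :
    ‖(μ : ℂ)⁻¹ * (Icc a b).indicator f (x / μ) - lam * (Icc a b).indicator f x‖ ^ 2 * w x =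
      (Icc (μ * a) (μ * b)).indicator (fun x => ‖lam‖ ^ 2 * C * x⁻¹) x +
        (Icc a b).indicator (fun x => ‖lam‖ ^ 2 * C * x⁻¹) x -
          2 * (Icc (μ * a) (μ * b) ∩ Icc a b).indicator (fun x => ‖lam‖ ^ 2 * C * x⁻¹) x := by
  have hmem : x / μ ∈ Icc a b ↔ x ∈ Icc (μ * a) (μ * b) := by
    simp only [mem_Icc, le_div_iff₀ hμ, div_le_iff₀ hμ, mul_comm μ]
  have hW : (‖lam‖ * ‖f x‖) ^ 2 * w x = ‖lam‖ ^ 2 * C * x⁻¹ := by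
    rw [mul_pow, mul_assoc, hf x hx, mul_assoc]
  by_cases hJ : x ∈ Icc (μ * a) (μ * b) <;> by_cases hI : x ∈ Icc a b <;>
    simp [hJ, hI, hmem, heig x hx, hW]
  ring

lemma integral_norm_dilate_indicator_Icc_sub_sq_mul {μ : ℝ} {lam : ℂ} (hμ : 0 < μ) (hμ1 : μ < 1)
    (hf : ∀ x > 0, ‖f x‖ ^ 2 * w x = C * x⁻¹)
    (heig : ∀ x > 0, (μ : ℂ)⁻¹ * f (x / μ) = lam * f x) (ha : 0 < a) (hab : a ≤ μ * b) :
    ∫ x in Ioi 0, ‖(μ : ℂ)⁻¹ * (Icc a b).indicator f (x / μ) - lam * (Icc a b).indicator f x‖ ^ 2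
        * w x = -2 * ‖lam‖ ^ 2 * C * Real.log μ := by
  have hb : 0 < b := pos_of_mul_pos_right (ha.trans_le hab) hμ.le
  have hinter : Icc (μ * a) (μ * b) ∩ Icc a b = Icc a (μ * b) := by
    rw [Icc_inter_Icc, max_eq_right (mul_le_of_le_one_left ha.le hμ1.le),
      min_eq_left (mul_le_of_le_one_left hb.le hμ1.le)]
  have hJ := integrable_indicator_Icc_mul_inv (‖lam‖ ^ 2 * C) (mul_pos hμ ha) (q := μ * b)
  have hI := integrable_indicator_Icc_mul_inv (‖lam‖ ^ 2 * C) ha (q := b)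
  have hK := integrable_indicator_Icc_mul_inv (‖lam‖ ^ 2 * C) ha (q := μ * b)
  rw [setIntegral_congr_fun measurableSet_Ioi fun x hx =>
      norm_dilate_indicator_Icc_sub_sq_mul hμ hf heig hx, hinter,
    integral_sub, integral_add, integral_const_mul,
    integral_Ioi_indicator_Icc_mul_inv _ (mul_pos hμ ha) (by nlinarith),
    integral_Ioi_indicator_Icc_mul_inv _ ha (by nlinarith),
    integral_Ioi_indicator_Icc_mul_inv _ ha hab, mul_div_mul_left _ _ hμ.ne', mul_div_assoc,
    Real.log_mul hμ.ne' (div_pos hb ha).ne']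
  · ring
  exacts [hJ.integrableOn, hI.integrableOn, hJ.integrableOn.add hI.integrableOn,
    hK.integrableOn.const_mul 2]

end IndicatorIntegrals

lemma integral_indicator_mul_conj_indicator_eq_zero {X : Type*} [MeasurableSpace X]
    {ν : Measure X} {s t : Set X} (hst : ν (s ∩ t) = 0) (f g w : X → ℂ) (S : Set X) :
    ∫ x in S, s.indicator f x * starRingEnd ℂ (t.indicator g x) * w x ∂ν = 0 := by
  refine integral_eq_zero_of_ae (ae_restrict_of_ae (measure_mono_null (fun x hx => ?_) hst))
  by_contra hx'
  rcases not_and_or.mp hx' with hs | ht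
  · exact hx (by simp [hs])
  · exact hx (by simp [ht])

theorem stmt5_general (μ α t : ℝ) (hμ : μ ∈ Set.Ioo (0:ℝ) 1)
    (lam : ℂ) (hlam : lam = ((μ ^ (-(α + 2) / 2) : ℝ) : ℂ) * Complex.exp (Complex.I * (t : ℂ))) :
    (∀ n : ℕ, 1 ≤ n →
      (∫ x in Set.Ioi (0:ℝ), ‖gSeq μ α t n x‖ ^ 2 * x ^ (-(α + 1)))
        = μ ^ (-(α + 2)) * n) ∧
    (∀ n m : ℕ, 1 ≤ n → 1 ≤ m → n ≠ m →
      (∫ x in Set.Ioi (0:ℝ),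
        gSeq μ α t n x * (starRingEnd ℂ) (gSeq μ α t m x) * ((x ^ (-(α + 1)) : ℝ) : ℂ)) = 0) ∧
    (∀ n : ℕ, 1 ≤ n → Real.log (1 / μ) < n →
      (∫ x in Set.Ioi (0:ℝ),
        ‖(μ : ℂ)⁻¹ * gSeq μ α t n (x / μ) - lam * gSeq μ α t n x‖ ^ 2
          * x ^ (-(α + 1)))
        = -2 * ‖lam‖ ^ 2 * μ ^ (-(α + 2)) * Real.log μ) ∧
    Tendsto (fun n : ℕ =>
      Real.sqrt (∫ x in Set.Ioi (0:ℝ),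
        ‖(μ : ℂ)⁻¹ * gSeq μ α t n (x / μ) - lam * gSeq μ α t n x‖ ^ 2
          * x ^ (-(α + 1))) /
      Real.sqrt (∫ x in Set.Ioi (0:ℝ),
        ‖gSeq μ α t n x‖ ^ 2 * x ^ (-(α + 1))))
      atTop (nhds 0) := by
  obtain ⟨hμ0, hμ1⟩ := hμ
  have hw (x : ℝ) (hx : x > 0) := norm_gEig_sq_mul_rpow (α := α) (t := t) hμ0 hx
  have hnorm (n : ℕ) (hn : 1 ≤ n) :
      ∫ x in Ioi 0, ‖gSeq μ α t n x‖ ^ 2 * x ^ (-(α + 1)) = μ ^ (-(α + 2)) * n := by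
    rw [← log_aSeq_pred_div hn]
    exact integral_norm_indicator_Icc_sq_mul hw (aSeq_pos n) (aSeq_antitone (Nat.sub_le n 1))
  have hdefect (n : ℕ) (hn : 1 ≤ n) (hn' : Real.log (1 / μ) < n) :
      ∫ x in Ioi 0, ‖(μ : ℂ)⁻¹ * gSeq μ α t n (x / μ) - lam * gSeq μ α t n x‖ ^ 2
        * x ^ (-(α + 1)) = -2 * ‖lam‖ ^ 2 * μ ^ (-(α + 2)) * Real.log μ := by
    subst hlam
    exact integral_norm_dilate_indicator_Icc_sub_sq_mul hμ0 hμ1 hw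
      (fun x hx => gEig_div hμ0 hμ1.ne hx) (aSeq_pos n) (aSeq_lt_mul_aSeq_pred hμ0 hn hn').le
  refine ⟨hnorm, fun n m _ _ hnm => integral_indicator_mul_conj_indicator_eq_zero
    (volume_Icc_aSeq_inter_Icc_aSeq hnm) _ _ _ _, hdefect, ?_⟩
  have hlarge : ∀ᶠ n : ℕ in atTop, 1 ≤ n ∧ Real.log (1 / μ) < n :=
    (eventually_ge_atTop 1).and (tendsto_natCast_atTop_atTop.eventually_gt_atTop _)
  have hlim : Tendsto (fun n : ℕ => √(-2 * ‖lam‖ ^ 2 * μ ^ (-(α + 2)) * Real.log μ) /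
      √(μ ^ (-(α + 2)) * n)) atTop (nhds 0) :=
    tendsto_const_nhds.div_atTop (Real.tendsto_sqrt_atTop.comp
      (tendsto_natCast_atTop_atTop.const_mul_atTop (Real.rpow_pos_of_pos hμ0 _)))
  refine hlim.congr' ?_
  filter_upwards [hlarge] with n ⟨hn, hn'⟩
  rw [hnorm n hn, hdefect n hn hn']

theorem stmt5 (μ α t : ℝ) (hμ : μ ∈ Set.Ioo (0:ℝ) 1) (hα : -1 ≤ α)
    (lam : ℂ) (hlam : lam = ((μ ^ (-(α + 2) / 2) : ℝ) : ℂ) * Complex.exp (Complex.I * (t : ℂ))) :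
    (∀ n : ℕ, 1 ≤ n →
      (∫ x in Set.Ioi (0:ℝ), ‖gSeq μ α t n x‖ ^ 2 * x ^ (-(α + 1)))
        = μ ^ (-(α + 2)) * n) ∧
    (∀ n m : ℕ, 1 ≤ n → 1 ≤ m → n ≠ m →
      (∫ x in Set.Ioi (0:ℝ),
        gSeq μ α t n x * (starRingEnd ℂ) (gSeq μ α t m x) * ((x ^ (-(α + 1)) : ℝ) : ℂ)) = 0) ∧
    (∀ n : ℕ, 1 ≤ n → Real.log (1 / μ) < n →
      (∫ x in Set.Ioi (0:ℝ),
        ‖(μ : ℂ)⁻¹ * gSeq μ α t n (x / μ) - lam * gSeq μ α t n x‖ ^ 2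
          * x ^ (-(α + 1)))
        = -2 * ‖lam‖ ^ 2 * μ ^ (-(α + 2)) * Real.log μ) ∧
    Tendsto (fun n : ℕ =>
      Real.sqrt (∫ x in Set.Ioi (0:ℝ),
        ‖(μ : ℂ)⁻¹ * gSeq μ α t n (x / μ) - lam * gSeq μ α t n x‖ ^ 2
          * x ^ (-(α + 1))) /
      Real.sqrt (∫ x in Set.Ioi (0:ℝ),
        ‖gSeq μ α t n x‖ ^ 2 * x ^ (-(α + 1))))
      atTop (nhds 0) :=
  stmt5_general μ α t hμ lam hlam
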